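/- arXiv:1609.09237 — 8 statements merged into one kernel-verified Lean document; each statement's English description precedes it below -/
import Mathlib

section
/- The matrix ξ does not belong to C(7,7,4). -/
/-- `V m n d` : the set of `m × n` real matrices with all entries in `{0,1}`,
each row summing to `1`, and with at most `d` nonzero columns. -/
def V (m n d : ℕ) : Set (Matrix (Fin m) (Fin n) ℝ) :=
  {p | (∀ x y, p x y = 0 ∨ p x y = 1) ∧ (∀ x, ∑ y, p x y = 1) ∧
       ({y : Fin n | ∃ x, p x y ≠ 0}).ncard ≤ d}

/-- `C m n d` : the convex hull of `V m n d`. -/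
def C (m n d : ℕ) : Set (Matrix (Fin m) (Fin n) ℝ) := convexHull ℝ (V m n d)

/-- The hypersignaling correlation `ξ`. -/
noncomputable def xi : Matrix (Fin 7) (Fin 7) ℝ :=
  (1/2 : ℝ) • Matrix.of
    ![![1,0,0,0,0,1,0],
      ![0,1,0,0,0,0,1],
      ![0,1,1,0,0,0,0],
      ![0,0,1,0,0,0,1],
      ![0,0,0,1,0,1,0],
      ![0,0,0,1,0,0,1],
      ![0,0,0,0,1,1,0]]

/-- The separating coefficient matrix. -/
def coefA : Fin 7 → Fin 7 → ℤ :=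
  ![![1,-100,-100,-100,-100,-1,-100],
    ![-100,1,-100,-100,-100,-100,1],
    ![-100,1,1,-100,-100,-100,-100],
    ![-100,-100,0,-100,-100,-100,0],
    ![-100,-100,-100,1,-100,-1,-100],
    ![-100,-100,-100,-1,-100,-100,-1],
    ![-100,-100,-100,-100,1,-1,-100]]

set_option maxRecDepth 100000 in
lemma keyLemma : ∀ S : Finset (Fin 7), S.card ≤ 4 →
    ∑ x, S.fold max (-1000) (coefA x) ≤ 0 := by decide

/-- The separating linear functional. -/
noncomputable def L (p : Matrix (Fin 7) (Fin 7) ℝ) : ℝ :=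
  ∑ x, ∑ y, (coefA x y : ℝ) * p x y

lemma L_linear : IsLinearMap ℝ L := by
  constructor
  · intro p q
    simp [L, Matrix.add_apply, mul_add, Finset.sum_add_distrib]
  · intro c p
    simp [L, Matrix.smul_apply, smul_eq_mul, Finset.mul_sum, mul_left_comm]

lemma V_sub : V 7 7 4 ⊆ {p | L p ≤ 0} := by
  rintro p ⟨h01, hrow, hcard⟩
  set Y : Finset (Fin 7) := Finset.univ.filter (fun y => ∃ x, p x y ≠ 0) with hY
  have hYcard : Y.card ≤ 4 := by
    have hset : {y : Fin 7 | ∃ x, p x y ≠ 0} = ↑Y := by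
      ext y; simp [hY]
    rwa [hset, Set.ncard_coe_finset] at hcard
  set M : Fin 7 → ℤ := fun x => Y.fold max (-1000) (coefA x) with hM
  have key := keyLemma Y hYcard
  have step1 : L p ≤ ∑ x, ∑ y, (M x : ℝ) * p x y := by
    apply Finset.sum_le_sum
    intro x _
    apply Finset.sum_le_sum
    intro y _
    rcases h01 x y with h0 | h1
    · rw [h0]; simp
    · rw [h1, mul_one, mul_one]
      have hy : y ∈ Y := by
        simp only [hY, Finset.mem_filter, Finset.mem_univ, true_and]
        exact ⟨x, by rw [h1]; norm_num⟩
      have : coefA x y ≤ M x := (Finset.le_fold_max _).mpr (Or.inr ⟨y, hy, le_rfl⟩)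
      exact_mod_cast this
  have step2 : ∑ x, ∑ y, (M x : ℝ) * p x y = ∑ x, (M x : ℝ) := by
    refine Finset.sum_congr rfl fun x _ => ?_
    rw [← Finset.mul_sum, hrow x, mul_one]
  have step3 : (∑ x, (M x : ℝ)) ≤ 0 := by exact_mod_cast key
  calc L p ≤ ∑ x, ∑ y, (M x : ℝ) * p x y := step1
    _ = ∑ x, (M x : ℝ) := step2
    _ ≤ 0 := step3

lemma L_xi : L xi = 1 := by
  simp only [L, xi, coefA, Matrix.smul_apply, Matrix.of_apply, smul_eq_mul,
    Fin.sum_univ_succ, Finset.sum_empty, Fin.sum_univ_zero,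
    Matrix.cons_val_zero, Matrix.cons_val_one, Matrix.head_cons,
    Matrix.cons_val_succ]
  norm_num

theorem xi_not_mem : xi ∉ C 7 7 4 := by
  intro h
  have hconv : Convex ℝ {p : Matrix (Fin 7) (Fin 7) ℝ | L p ≤ 0} :=
    convex_halfSpace_le L_linear 0
  have := convexHull_min V_sub hconv h
  rw [Set.mem_setOf_eq, L_xi] at this
  norm_num at this
end

section
/- With g·A := \sum_{x,y} g_{x,y} A_{x,y}: (i) g·ξ = 1/2; (ii) for every q ∈ C(7,7,4), g·q ≤ 10/21. In particular g·ξ > max_{q ∈ C(7,7,4)} g·q, so ξ ∉ C(7,7,4). -/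
/-- The game matrix `g`. -/
noncomputable def g : Matrix (Fin 7) (Fin 7) ℝ :=
  (1/21 : ℝ) • Matrix.of
    ![![2,0,0,0,0,1,0],
      ![0,2,0,0,0,0,2],
      ![0,2,2,0,0,0,0],
      ![0,0,2,0,0,0,2],
      ![0,0,0,1,0,1,0],
      ![0,0,0,1,0,0,0],
      ![0,0,0,0,2,1,0]]

/-- Natural-number numerators of `21 • g`. -/
def Mg : Fin 7 → Fin 7 → ℕ :=
  ![![2,0,0,0,0,1,0], ![0,2,0,0,0,0,2], ![0,2,2,0,0,0,0], ![0,0,2,0,0,0,2],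
    ![0,0,0,1,0,1,0], ![0,0,0,1,0,0,0], ![0,0,0,0,2,1,0]]

/-- Natural-number numerators of `2 • ξ`. -/
def Nx : Fin 7 → Fin 7 → ℕ :=
  ![![1,0,0,0,0,1,0], ![0,1,0,0,0,0,1], ![0,1,1,0,0,0,0], ![0,0,1,0,0,0,1],
    ![0,0,0,1,0,1,0], ![0,0,0,1,0,0,1], ![0,0,0,0,1,1,0]]

lemma g_eq (x y : Fin 7) : g x y = (Mg x y : ℝ) / 21 := by
  fin_cases x <;> fin_cases y <;>
    norm_num [g, Mg, Matrix.cons_val_succ', Matrix.cons_val_zero']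

lemma xi_eq (x y : Fin 7) : xi x y = (Nx x y : ℝ) / 2 := by
  fin_cases x <;> fin_cases y <;>
    norm_num [xi, Nx, Matrix.cons_val_succ', Matrix.cons_val_zero']

set_option maxRecDepth 40000 in
lemma key : ∀ s : Finset (Fin 7), s.card ≤ 4 →
    ∑ x : Fin 7, (s.sup fun y => Mg x y) ≤ 10 := by decide

lemma gxi : ∑ x, ∑ y, g x y * xi x y = 1/2 := by
  have h1 : ∑ x, ∑ y, g x y * xi x y
      = ((∑ x, ∑ y, Mg x y * Nx x y : ℕ) : ℝ) / 42 := by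
    push_cast [Finset.sum_div]
    exact Finset.sum_congr rfl fun x _ => Finset.sum_congr rfl fun y _ => by
      rw [g_eq, xi_eq]; ring
  rw [h1, show (∑ x, ∑ y, Mg x y * Nx x y : ℕ) = 21 from by decide]
  norm_num

lemma vertex_bound {p : Matrix (Fin 7) (Fin 7) ℝ} (hp : p ∈ V 7 7 4) :
    ∑ x, ∑ y, g x y * p x y ≤ 10/21 := by
  classical
  obtain ⟨h01, hrow, hcard⟩ := hp
  set s : Finset (Fin 7) := Finset.univ.filter (fun y => ∃ x, p x y ≠ 0) with hs
  have hset : {y : Fin 7 | ∃ x, p x y ≠ 0} = ↑s := by ext y; simp [hs]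
  have hsc : s.card ≤ 4 := by
    rw [hset, Set.ncard_coe_finset] at hcard; exact hcard
  have hrowb : ∀ x, ∑ y, g x y * p x y ≤ ((s.sup fun y => Mg x y : ℕ) : ℝ) / 21 := by
    intro x
    have hterm : ∀ y, g x y * p x y ≤ ((s.sup fun y => Mg x y : ℕ) : ℝ) / 21 * p x y := by
      intro y
      rcases h01 x y with h | h
      · simp [h]
      · rw [h, mul_one, mul_one, g_eq]
        have hy : y ∈ s := by
          simp only [hs, Finset.mem_filter, Finset.mem_univ, true_and]
          exact ⟨x, by rw [h]; norm_num⟩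
        have h2 : (Mg x y : ℝ) ≤ ((s.sup fun y => Mg x y : ℕ) : ℝ) := by
          exact_mod_cast Finset.le_sup (f := fun y => Mg x y) hy
        linarith
    calc ∑ y, g x y * p x y
        ≤ ∑ y, ((s.sup fun y => Mg x y : ℕ) : ℝ) / 21 * p x y :=
          Finset.sum_le_sum fun y _ => hterm y
      _ = ((s.sup fun y => Mg x y : ℕ) : ℝ) / 21 * ∑ y, p x y := by
          rw [Finset.mul_sum]
      _ = ((s.sup fun y => Mg x y : ℕ) : ℝ) / 21 := by rw [hrow x, mul_one]
  calc ∑ x, ∑ y, g x y * p x y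
      ≤ ∑ x, ((s.sup fun y => Mg x y : ℕ) : ℝ) / 21 :=
        Finset.sum_le_sum fun x _ => hrowb x
    _ = ((∑ x, s.sup fun y => Mg x y : ℕ) : ℝ) / 21 := by
        rw [← Finset.sum_div]; norm_cast
    _ ≤ 10/21 := by
        have h10 : ((∑ x, s.sup fun y => Mg x y : ℕ) : ℝ) ≤ 10 := by
          exact_mod_cast key s hsc
        linarith

lemma hull_bound : ∀ q ∈ C 7 7 4, ∑ x, ∑ y, g x y * q x y ≤ 10/21 := by
  have hconv : Convex ℝ {q : Matrix (Fin 7) (Fin 7) ℝ | ∑ x, ∑ y, g x y * q x y ≤ 10/21} := by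
    apply convex_halfSpace_le
    constructor
    · intro a b
      simp only [Matrix.add_apply, mul_add, Finset.sum_add_distrib]
    · intro c a
      simp only [Matrix.smul_apply, smul_eq_mul, Finset.mul_sum]
      exact Finset.sum_congr rfl fun x _ => Finset.sum_congr rfl fun y _ => by ring
  exact fun q hq =>
    convexHull_min (fun p hp => vertex_bound hp) hconv hq

theorem game_separation :
    (∑ x, ∑ y, g x y * xi x y = 1/2) ∧
    (∀ q ∈ C 7 7 4, ∑ x, ∑ y, g x y * q x y ≤ 10/21) ∧
    xi ∉ C 7 7 4 := by
  refine ⟨gxi, hull_bound, fun h => ?_⟩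
  have := hull_bound xi h
  rw [gxi] at this
  linarith
end

section
/- Let V be a finite-dimensional real vector space, K ⊆ V a convex cone containing 0, and ū ∈ V. For a positive integer n, let M(n) := { f : Fin n → V | (∀ y, f(y) ∈ K) and \sum_y f(y) = ū }, a convex subset of the function space Fin n → V. Suppose e : Fin n → V is a family of nonzero vectors each lying on an extreme ray of K (i.e., e(y) ∈ K and whenever a, b ∈ K satisfy a + b = e(y), then a and b are nonnegative scalar multiples of e(y)), and suppose there exists a linear functional u* : V → ℝ with u*(e(y)) = 1 for all y. Let p : Fin n → ℝ satisfy p(y) > 0 for all y and \sum_y p(y) • e(y) = ū. Then the function f := (y ↦ p(y) • e(y)) is an extreme point of M(n) if and only if the family (e(y))_{y ∈ Fin n} is linearly independent. -/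
/-!
If the `e y` are linearly dependent, say `∑ q y • e y = 0` with `q ≠ 0`, then for small `ε > 0` the
weights `p ± ε q` stay positive, so `y ↦ (p y ± ε q y) • e y` are two distinct measurements whose
midpoint is `f`. Conversely, if `f = a • g + b • h` with measurements `g`, `h` and `a, b > 0`,
then `a • g y + b • h y = p y • e y` is a sum of two elements of `K`, so extremality of the ray
through `e y` forces `g y = d y • e y`; comparing `∑ d y • e y = ū = ∑ p y • e y` and using linear
independence gives `d = p`, i.e. `g = f`.
-/

open Finset Filter Topology

theorem eq_zero_of_add_mem_of_sub_mem_of_mem_extremePoints {E : Type*} [AddCommGroup E]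
    [Module ℝ E] {A : Set E} {x v : E} (hx : x ∈ A.extremePoints ℝ) (hadd : x + v ∈ A)
    (hsub : x - v ∈ A) : v = 0 := by
  have hseg : x ∈ openSegment ℝ (x + v) (x - v) :=
    ⟨1 / 2, 1 / 2, by norm_num, by norm_num, by norm_num, by module⟩
  simpa using hx.2 hadd hsub hseg

theorem exists_pos_forall_pos_add_mul {ι : Type*} [Finite ι] {p : ι → ℝ} (hp : ∀ y, 0 < p y)
    (q : ι → ℝ) : ∃ ε > 0, ∀ y, 0 < p y + ε * q y ∧ 0 < p y - ε * q y := by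
  have hnear : ∀ᶠ t in 𝓝 (0 : ℝ), ∀ y, 0 < p y + t * q y := by
    refine eventually_all.2 fun y => ?_
    have hcont : Continuous fun t : ℝ => p y + t * q y := by fun_prop
    exact continuousAt_const.eventually_lt hcont.continuousAt (by simpa using hp y)
  obtain ⟨δ, hδ, hball⟩ := Metric.eventually_nhds_iff.1 hnear
  have hclose : dist (δ / 2) 0 < δ ∧ dist (-(δ / 2)) 0 < δ := by
    simp only [Real.dist_0_eq_abs, abs_neg, abs_of_pos (half_pos hδ), half_lt_self hδ, and_self]
  exact ⟨δ / 2, half_pos hδ, fun y =>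
    ⟨hball hclose.1 y, by simpa [sub_eq_add_neg] using hball hclose.2 y⟩⟩

section

variable {V : Type*} [AddCommGroup V] [Module ℝ V]

def IsExtremeDirection (K : ConvexCone ℝ V) (v : V) : Prop :=
  ∀ a b : V, a ∈ K → b ∈ K → a + b = v →
    (∃ c : ℝ, 0 ≤ c ∧ a = c • v) ∧ (∃ c : ℝ, 0 ≤ c ∧ b = c • v)

theorem IsExtremeDirection.exists_eq_smul_of_add_eq_smul {K : ConvexCone ℝ V} {v a b : V}
    (hv : IsExtremeDirection K v) (ha : a ∈ K) (hb : b ∈ K) {c : ℝ} (hc : 0 < c)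
    (hab : a + b = c • v) : ∃ d : ℝ, a = d • v := by
  obtain ⟨⟨k, -, hk⟩, -⟩ := hv (c⁻¹ • a) (c⁻¹ • b) (K.smul_mem (inv_pos.2 hc) ha)
    (K.smul_mem (inv_pos.2 hc) hb) (by rw [← smul_add, hab, inv_smul_smul₀ hc.ne'])
  exact ⟨c * k, by rw [mul_smul, ← hk, smul_inv_smul₀ hc.ne']⟩

def measurements {ι : Type*} [Fintype ι] (K : ConvexCone ℝ V) (ubar : V) : Set (ι → V) :=
  {f | (∀ y, f y ∈ K) ∧ ∑ y, f y = ubar}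

variable {ι : Type*} [Fintype ι] {K : ConvexCone ℝ V} {ubar : V} {e : ι → V}

theorem smul_mem_measurements (heK : ∀ y, e y ∈ K) {c : ι → ℝ} (hc : ∀ y, 0 < c y)
    (hsum : ∑ y, c y • e y = ubar) : (fun y => c y • e y) ∈ measurements K ubar :=
  ⟨fun y => K.smul_mem (hc y) (heK y), hsum⟩

theorem linearIndependent_of_smul_mem_extremePoints_measurements (heK : ∀ y, e y ∈ K)
    (heNe : ∀ y, e y ≠ 0) {p : ι → ℝ} (hp : ∀ y, 0 < p y) (hsum : ∑ y, p y • e y = ubar)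
    (hf : (fun y => p y • e y) ∈ (measurements K ubar).extremePoints ℝ) :
    LinearIndependent ℝ e := by
  refine Fintype.linearIndependent_iff.2 fun q hq y => ?_
  obtain ⟨ε, hε, hpos⟩ := exists_pos_forall_pos_add_mul hp q
  have hsum_perturb (s : ℝ) : ∑ y, (p y + s * q y) • e y = ubar := by
    simp only [add_smul, mul_smul, sum_add_distrib, ← smul_sum, hq, smul_zero, add_zero, hsum]
  have hmem (s : ℝ) (hs : ∀ y, 0 < p y + s * q y) :
      (fun y => p y • e y) + s • (fun y => q y • e y) ∈ measurements K ubar := by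
    convert smul_mem_measurements heK hs (hsum_perturb s) using 1
    ext y
    simp only [Pi.add_apply, Pi.smul_apply, add_smul, mul_smul]
  have hzero : ε • (fun y => q y • e y) = 0 :=
    eq_zero_of_add_mem_of_sub_mem_of_mem_extremePoints hf (hmem ε fun y => (hpos y).1)
      (by simpa [sub_eq_add_neg] using
        hmem (-ε) fun y => by simpa [sub_eq_add_neg] using (hpos y).2)
  simpa [hε.ne', heNe y] using congrFun hzero y

theorem smul_mem_extremePoints_measurements_of_linearIndependent (heK : ∀ y, e y ∈ K)
    (hExt : ∀ y, IsExtremeDirection K (e y)) {p : ι → ℝ} (hp : ∀ y, 0 < p y)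
    (hsum : ∑ y, p y • e y = ubar) (hli : LinearIndependent ℝ e) :
    (fun y => p y • e y) ∈ (measurements K ubar).extremePoints ℝ := by
  refine ⟨smul_mem_measurements heK hp hsum, ?_⟩
  rintro g ⟨hgK, hgsum⟩ h ⟨hhK, -⟩ ⟨a, b, ha, hb, -, hab⟩
  have hray : ∀ y, ∃ d : ℝ, a • g y = d • e y := fun y =>
    (hExt y).exists_eq_smul_of_add_eq_smul (K.smul_mem ha (hgK y)) (K.smul_mem hb (hhK y)) (hp y)
      (congrFun hab y)
  choose d hd using hray
  have hdsum : ∑ y, (a⁻¹ * d y - p y) • e y = 0 := by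
    simp only [sub_smul, mul_smul, ← hd, inv_smul_smul₀ ha.ne', sum_sub_distrib, hgsum, hsum,
      sub_self]
  have hdp := Fintype.linearIndependent_iff.1 hli _ hdsum
  ext y
  rw [← inv_smul_smul₀ ha.ne' (g y), hd, smul_smul, ← sub_eq_zero.1 (hdp y)]

end

theorem extremal_measurement_iff_linearIndependent_general
    {V : Type*} [AddCommGroup V] [Module ℝ V]
    (K : ConvexCone ℝ V) (ubar : V)
    (n : ℕ) (e : Fin n → V)
    (heK : ∀ y, e y ∈ K) (heNe : ∀ y, e y ≠ 0)
    (hExt : ∀ y, ∀ a b : V, a ∈ K → b ∈ K → a + b = e y →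
      (∃ c : ℝ, 0 ≤ c ∧ a = c • e y) ∧ (∃ c : ℝ, 0 ≤ c ∧ b = c • e y))
    (p : Fin n → ℝ) (hp : ∀ y, 0 < p y) (hsum : ∑ y, p y • e y = ubar) :
    (fun y => p y • e y) ∈
      Set.extremePoints ℝ {f : Fin n → V | (∀ y, f y ∈ K) ∧ ∑ y, f y = ubar} ↔
    LinearIndependent ℝ e :=
  ⟨linearIndependent_of_smul_mem_extremePoints_measurements heK heNe hp hsum,
    smul_mem_extremePoints_measurements_of_linearIndependent heK hExt hp hsum⟩

/-- Extremality criterion for measurements in a generalized probabilistic theory: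
a measurement supported on extremal normalized effects is an extreme point of the
set of measurements if and only if its supporting effects are linearly independent. -/
theorem extremal_measurement_iff_linearIndependent
    {V : Type*} [AddCommGroup V] [Module ℝ V] [FiniteDimensional ℝ V]
    (K : ConvexCone ℝ V) (hK0 : (0 : V) ∈ K) (ubar : V)
    (n : ℕ) (hn : 0 < n) (e : Fin n → V)
    (heK : ∀ y, e y ∈ K) (heNe : ∀ y, e y ≠ 0)
    (hExt : ∀ y, ∀ a b : V, a ∈ K → b ∈ K → a + b = e y →
      (∃ c : ℝ, 0 ≤ c ∧ a = c • e y) ∧ (∃ c : ℝ, 0 ≤ c ∧ b = c • e y))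
    (ustar : V →ₗ[ℝ] ℝ) (hustar : ∀ y, ustar (e y) = 1)
    (p : Fin n → ℝ) (hp : ∀ y, 0 < p y) (hsum : ∑ y, p y • e y = ubar) :
    (fun y => p y • e y) ∈
      Set.extremePoints ℝ {f : Fin n → V | (∀ y, f y ∈ K) ∧ ∑ y, f y = ubar} ↔
    LinearIndependent ℝ e :=
  extremal_measurement_iff_linearIndependent_general K ubar n e heK heNe hExt p hp hsum
end

section
/- Let m, n, d, k be positive integers, let g be an m×n real matrix, and define the m×(n·k) real matrix g' by g'_{x,(y,i)} = g_{x,y} for all x ∈ Fin m, y ∈ Fin n, i ∈ Fin k (each column of g repeated k times). Then max_{p ∈ C(m,n,d)} \sum_{x,y} g_{x,y} p_{x,y} = max_{p' ∈ C(m,n·k,d)} \sum_{x,y'} g'_{x,y'} p'_{x,y'} (both maxima exist, as each set is the convex hull of a finite set and hence compact). -/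
open Function Set

def payoff {ι κ R : Type*} [Fintype ι] [Fintype κ] [CommSemiring R] (g : Matrix ι κ R) :
    Matrix ι κ R →ₗ[R] R where
  toFun p := ∑ x, ∑ y, g x y * p x y
  map_add' p q := by simp [mul_add, Finset.sum_add_distrib]
  map_smul' c p := by simp [Finset.mul_sum, mul_left_comm]

theorem LinearMap.isGreatest_image_convexHull {𝕜 E : Type*} [Field 𝕜] [LinearOrder 𝕜]
    [IsStrictOrderedRing 𝕜] [AddCommGroup E] [Module 𝕜 E] (f : E →ₗ[𝕜] 𝕜) {s : Set E}
    {M : 𝕜} (h : IsGreatest (f '' s) M) : IsGreatest (f '' convexHull 𝕜 s) M := by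
  refine ⟨image_mono (subset_convexHull 𝕜 s) h.1, ?_⟩
  rintro _ ⟨p, hp, rfl⟩
  exact convexHull_min (fun q hq => h.2 ⟨q, hq, rfl⟩) ((convex_Iic M).linear_preimage f) hp

theorem exists_eq_pi_single_of_sum_eq_one {α : Type*} [Fintype α] [DecidableEq α]
    {r : α → ℝ} (h01 : ∀ a, r a = 0 ∨ r a = 1) (hsum : ∑ a, r a = 1) :
    ∃ a, r = Pi.single a 1 := by
  have hnonneg : ∀ a, 0 ≤ r a := fun a => by rcases h01 a with h | h <;> simp [h]
  obtain ⟨a, -, ha⟩ : ∃ a ∈ Finset.univ, r a ≠ 0 :=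
    Finset.exists_ne_zero_of_sum_ne_zero (by simp [hsum])
  have hra : r a = 1 := (h01 a).resolve_left ha
  have hrest : ∑ b ∈ Finset.univ.erase a, r b = 0 := by
    linarith [Finset.add_sum_erase Finset.univ r (Finset.mem_univ a)]
  rw [Finset.sum_eq_zero_iff_of_nonneg fun b _ => hnonneg b] at hrest
  refine ⟨a, funext fun b => ?_⟩
  rcases eq_or_ne b a with rfl | hb
  · simp [hra]
  · simp [hb, hrest b (Finset.mem_erase.2 ⟨hb, Finset.mem_univ b⟩)]

section Strategies

variable {m n : ℕ}

theorem setOf_exists_pi_single_ne_zero (c : Fin m → Fin n) :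
    {y | ∃ x, (Pi.single (c x) (1 : ℝ) : Fin n → ℝ) y ≠ 0} = range c := by
  ext y
  simp [Pi.single_apply, eq_comm]

theorem V_eq_image (d : ℕ) :
    V m n d = (fun c : Fin m → Fin n => Matrix.of fun x => Pi.single (c x) 1) ''
      {c | (range c).ncard ≤ d} := by
  ext p
  constructor
  · rintro ⟨h01, hsum, hcols⟩
    choose c hc using fun x => exists_eq_pi_single_of_sum_eq_one (h01 x) (hsum x)
    have hp : p = Matrix.of fun x => Pi.single (c x) 1 := funext hc
    subst hp
    exact ⟨c, by simpa [setOf_exists_pi_single_ne_zero] using hcols, rfl⟩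
  · rintro ⟨c, hc, rfl⟩
    refine ⟨fun x y => ?_, fun x => by simp, by simpa [setOf_exists_pi_single_ne_zero] using hc⟩
    by_cases h : y = c x <;> simp [h]

theorem image_payoff_V (g : Matrix (Fin m) (Fin n) ℝ) (d : ℕ) :
    payoff g '' V m n d =
      (fun c : Fin m → Fin n => ∑ x, g x (c x)) '' {c | (range c).ncard ≤ d} := by
  rw [V_eq_image, image_image]
  congr! with c
  simp [payoff, Pi.single_apply]

theorem exists_isGreatest_image_payoff_V (g : Matrix (Fin m) (Fin n) ℝ) {d : ℕ} (hn : 0 < n)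
    (hd : 0 < d) : ∃ M, IsGreatest (payoff g '' V m n d) M := by
  have hconst : (range fun _ : Fin m => (⟨0, hn⟩ : Fin n)).ncard ≤ d :=
    (ncard_le_ncard range_const_subset).trans (by rwa [ncard_singleton])
  rw [image_payoff_V]
  exact ((toFinite _).image _).isCompact.exists_isGreatest ⟨_, mem_image_of_mem _ hconst⟩

end Strategies

theorem ncard_range_comp_le {ι α β : Type*} [Finite ι] (f : α → β) (c : ι → α) :
    (range (f ∘ c)).ncard ≤ (range c).ncard := by
  rw [range_comp]
  exact ncard_image_le (finite_range c)

theorem image_sum_comp_of_surjective {ι α β R : Type*} [Fintype ι] [AddCommMonoid R]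
    {σ : β → α} (hσ : Surjective σ) (g : ι → α → R) (d : ℕ) :
    (fun c : ι → β => ∑ x, g x (σ (c x))) '' {c | (range c).ncard ≤ d} =
      (fun c : ι → α => ∑ x, g x (c x)) '' {c | (range c).ncard ≤ d} := by
  apply Subset.antisymm
  · rintro _ ⟨c, hc, rfl⟩
    exact ⟨σ ∘ c, (ncard_range_comp_le σ c).trans hc, rfl⟩
  · rintro _ ⟨c, hc, rfl⟩
    refine ⟨surjInv hσ ∘ c, (ncard_range_comp_le _ c).trans hc, ?_⟩
    simp only [comp_apply, surjInv_eq hσ]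

theorem game_column_repetition_general (m n d k : ℕ) (hn : 0 < n)
    (hd : 0 < d) (hk : 0 < k) (g : Matrix (Fin m) (Fin n) ℝ)
    (g' : Matrix (Fin m) (Fin (n * k)) ℝ)
    (hg' : ∀ (x : Fin m) (y : Fin n) (i : Fin k),
      g' x (finProdFinEquiv (y, i)) = g x y) :
    ∃ M : ℝ,
      IsGreatest ((fun p => ∑ x, ∑ y, g x y * p x y) '' C m n d) M ∧
      IsGreatest ((fun p => ∑ x, ∑ y', g' x y' * p x y') '' C m (n * k) d) M := by
  let σ : Fin (n * k) → Fin n := fun b => (finProdFinEquiv.symm b).1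
  have hσ : Surjective σ := fun y =>
    ⟨finProdFinEquiv (y, ⟨0, hk⟩), congrArg Prod.fst (finProdFinEquiv.symm_apply_apply _)⟩
  have hg'σ : ∀ x b, g' x b = g x (σ b) := fun x b => by
    have := hg' x (σ b) (finProdFinEquiv.symm b).2
    rwa [Prod.mk.eta, Equiv.apply_symm_apply] at this
  have hvalues : payoff g' '' V m (n * k) d = payoff g '' V m n d := by
    simp only [image_payoff_V, hg'σ]
    exact image_sum_comp_of_surjective hσ g d
  obtain ⟨M, hM⟩ := exists_isGreatest_image_payoff_V g hn hd
  exact ⟨M, (payoff g).isGreatest_image_convexHull hM,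
    (payoff g').isGreatest_image_convexHull (hvalues ▸ hM)⟩

/-- Repeating each column of the game matrix `k` times does not change the
maximal payoff over `C`. -/
theorem game_column_repetition (m n d k : ℕ) (hm : 0 < m) (hn : 0 < n)
    (hd : 0 < d) (hk : 0 < k) (g : Matrix (Fin m) (Fin n) ℝ)
    (g' : Matrix (Fin m) (Fin (n * k)) ℝ)
    (hg' : ∀ (x : Fin m) (y : Fin n) (i : Fin k),
      g' x (finProdFinEquiv (y, i)) = g x y) :
    ∃ M : ℝ,
      IsGreatest ((fun p => ∑ x, ∑ y, g x y * p x y) '' C m n d) M ∧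
      IsGreatest ((fun p => ∑ x, ∑ y', g' x y' * p x y') '' C m (n * k) d) M :=
  game_column_repetition_general m n d k hn hd hk g g' hg'
end

section
/- The set { f ∈ ℝ³ : f·ω_i ≥ 0 for all i ∈ {0,1,2,3} } equals { a₀•e₀ + a₁•e₁ + a₂•e₂ + a₃•e₃ : a₀, a₁, a₂, a₃ ≥ 0 }, i.e., the effect cone of the squit is the convex cone generated by the four extremal normalized effects e₀, e₁, e₂, e₃. -/
open Matrix

/-- The four extremal states of the squit. -/
noncomputable def ws : Fin 4 → (Fin 3 → ℝ) :=
  ![![1, 0, 1], ![0, 1, 1], ![-1, 0, 1], ![0, -1, 1]]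

/-- The four extremal normalized effects of the squit. -/
noncomputable def es : Fin 4 → (Fin 3 → ℝ) :=
  ![![1, 1, 1], ![-1, 1, 1], ![-1, -1, 1], ![1, -1, 1]]

/-- The effect cone of the squit is the convex cone generated by the four
extremal normalized effects. -/
theorem squit_effect_cone :
    {f : Fin 3 → ℝ | ∀ i : Fin 4, 0 ≤ f ⬝ᵥ ws i} =
    {f : Fin 3 → ℝ | ∃ a₀ a₁ a₂ a₃ : ℝ, 0 ≤ a₀ ∧ 0 ≤ a₁ ∧ 0 ≤ a₂ ∧ 0 ≤ a₃ ∧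
      f = a₀ • es 0 + a₁ • es 1 + a₂ • es 2 + a₃ • es 3} := by
  ext f
  simp only [Set.mem_setOf_eq]
  constructor
  · intro h
    have h0 := h 0; have h1 := h 1; have h2 := h 2; have h3 := h 3
    simp [ws, dotProduct, Fin.sum_univ_three] at h0 h1 h2 h3
    rcases le_total (f 1) (f 0) with hc | hc
    · refine ⟨(f 2 + f 1)/2, 0, (f 2 - f 0)/2, (f 0 - f 1)/2,
        by linarith, le_refl 0, by linarith, by linarith, ?_⟩
      funext i
      fin_cases i <;> simp [es, Fin.sum_univ_three] <;> linarith
    · refine ⟨(f 2 + f 0)/2, (f 1 - f 0)/2, (f 2 - f 1)/2, 0,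
        by linarith, by linarith, by linarith, le_refl 0, ?_⟩
      funext i
      fin_cases i <;> simp [es, Fin.sum_univ_three] <;> linarith
  · rintro ⟨a₀, a₁, a₂, a₃, h0, h1, h2, h3, rfl⟩
    intro i
    fin_cases i <;> simp [ws, es, dotProduct, Fin.sum_univ_three] <;> linarith
end

section
/- Let n be a positive integer, p : Fin n → ℝ with p(y) > 0 for all y, and e : Fin n → ℝ³ a linearly independent family each of whose values lies in {e₀, e₁, e₂, e₃}, such that \sum_y p(y) • e(y) = (0,0,1). Then n = 2, p takes constant value 1/2, and the set of values of e is either {e₀, e₂} or {e₁, e₃}. Hence the squit has exactly two extremal measurements supported on extremal normalized effects, and its signaling dimension is two. -/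
open Matrix

lemma range_fin_two' {α : Type*} (f : Fin 2 → α) : Set.range f = {f 0, f 1} := by
  ext x
  constructor
  · rintro ⟨y, rfl⟩; fin_cases y <;> simp
  · rintro (rfl | rfl) <;> exact ⟨_, rfl⟩

set_option maxHeartbeats 2000000 in
/-- The squit has exactly two extremal measurements supported on extremal
normalized effects; its signaling dimension is two. -/
theorem squit_extremal_measurements (n : ℕ) (hn : 0 < n)
    (p : Fin n → ℝ) (hp : ∀ y, 0 < p y)
    (e : Fin n → (Fin 3 → ℝ)) (hind : LinearIndependent ℝ e)
    (hval : ∀ y, e y ∈ ({es 0, es 1, es 2, es 3} : Set (Fin 3 → ℝ)))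
    (hsum : ∑ y, p y • e y = ![0, 0, 1]) :
    n = 2 ∧ (∀ y, p y = 1/2) ∧
    (Set.range e = {es 0, es 2} ∨ Set.range e = {es 1, es 3}) := by
  have hn3 : n ≤ 3 := by
    have := hind.fintype_card_le_finrank
    simpa using this
  simp only [Set.mem_insert_iff, Set.mem_singleton_iff] at hval
  interval_cases n
  · -- n = 1
    exfalso
    rw [Fin.sum_univ_one] at hsum
    rcases hval 0 with h | h | h | h <;> rw [h] at hsum <;>
      [skip; skip; skip; skip] <;>
      · have c0 := congrFun hsum 0
        simp [es] at c0
        linarith [hp 0]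
  · -- n = 2
    have hne : e 0 ≠ e 1 := fun h => absurd (hind.injective h) (by decide)
    rw [Fin.sum_univ_two] at hsum
    rcases hval 0 with h0 | h0 | h0 | h0 <;> rcases hval 1 with h1 | h1 | h1 | h1 <;>
      rw [h0, h1] at hsum <;>
      have c0 := congrFun hsum 0 <;> have c1 := congrFun hsum 1 <;>
      have c2 := congrFun hsum 2 <;> simp [es] at c0 c1 c2 <;>
      first
      | exact absurd (h0.trans h1.symm) hne
      | (exfalso; linarith [hp 0, hp 1])
      | · have hp0 : p 0 = 1/2 := by linarith
          have hp1 : p 1 = 1/2 := by linarith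
          refine ⟨rfl, fun y => by fin_cases y <;> [exact hp0; exact hp1], ?_⟩
          rw [range_fin_two', h0, h1]
          first
          | exact Or.inl rfl
          | exact Or.inr rfl
          | exact Or.inl (Set.pair_comm _ _)
          | exact Or.inr (Set.pair_comm _ _)
  · -- n = 3
    exfalso
    have hne01 : e 0 ≠ e 1 := fun h => absurd (hind.injective h) (by decide)
    have hne02 : e 0 ≠ e 2 := fun h => absurd (hind.injective h) (by decide)
    have hne12 : e 1 ≠ e 2 := fun h => absurd (hind.injective h) (by decide)
    rw [Fin.sum_univ_three] at hsum
    rcases hval 0 with h0 | h0 | h0 | h0 <;> rcases hval 1 with h1 | h1 | h1 | h1 <;>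
      rcases hval 2 with h2 | h2 | h2 | h2 <;>
      first
      | exact absurd (h0.trans h1.symm) hne01
      | exact absurd (h0.trans h2.symm) hne02
      | exact absurd (h1.trans h2.symm) hne12
      | (rw [h0, h1, h2] at hsum
         have c0 := congrFun hsum 0
         have c1 := congrFun hsum 1
         simp [es] at c0 c1
         linarith [hp 0, hp 1, hp 2])
end

section
/- For all positive integers m and n, let ω : Fin m → ℝ³ with ω(x) ∈ convexHull{ω₀, ω₁, ω₂, ω₃} for every x, and let f : Fin n → ℝ³ satisfy f(y)·σ ≥ 0 for every σ ∈ convexHull{ω₀, ω₁, ω₂, ω₃} and every y, together with \sum_y f(y) = (0,0,1). Then the m×n matrix p defined by p_{x,y} = f(y)·ω(x) belongs to C(m,n,2). In other words, every input/output correlation obtainable from a single squit is obtainable from one classical bit with shared randomness. -/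
open Matrix

/-!
The effects of the squit form the cone over a square: its extreme rays `![s, t, 1] / 2`
(`s, t = ±1`) come in antipodal pairs summing to the unit effect, so for `t = ±1` the pair
`![1, t, 1] / 2`, `![-1, -t, 1] / 2` is a two-outcome measurement. Decomposing every effect
`f y` along these rays writes `f` as a coarse-graining of a random choice between these two binary
measurements, and `∑ y, f y = ē` forces both outcomes of each binary measurement to carry the same
total weight. A one-bit protocol then simulates `f`: shared randomness chooses the binary
measurement together with one candidate output for each of its outcomes, and the bit transmits
the outcome.
-/

section BinaryChannel

variable {m n : ℕ}

lemma mem_V_two_of_rows_mem_pair {y y' : Fin n} {p : Matrix (Fin m) (Fin n) ℝ}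
    (hp : ∀ x, p x = Pi.single y 1 ∨ p x = Pi.single y' 1) : p ∈ V m n 2 := by
  refine ⟨fun x z => ?_, fun x => ?_, ?_⟩
  · rcases hp x with h | h <;> rw [h, Pi.single_apply] <;> split_ifs <;> simp
  · rcases hp x with h | h <;> simp [h]
  · have hcols : {z : Fin n | ∃ x, p x z ≠ 0} ⊆ {y, y'} := by
      rintro z ⟨x, hx⟩
      rcases hp x with h | h <;> rw [h, Pi.single_apply] at hx <;> split_ifs at hx with hz <;>
        simp_all
    calc {z : Fin n | ∃ x, p x z ≠ 0}.ncard ≤ ({y, y'} : Set (Fin n)).ncard :=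
          Set.ncard_le_ncard hcols
      _ ≤ 2 := (Set.ncard_insert_le _ _).trans (by simp)

def binaryChannel (y y' : Fin n) (P : Fin m → ℝ) : Matrix (Fin m) (Fin n) ℝ :=
  of fun x => P x • Pi.single y 1 + (1 - P x) • Pi.single y' 1

lemma binaryChannel_mem_C (y y' : Fin n) {P : Fin m → ℝ} (hP : ∀ x, P x ∈ Set.Icc 0 1) :
    binaryChannel y y' P ∈ C m n 2 := by
  have hrows : binaryChannel y y' P ∈
      Set.univ.pi fun _ => convexHull ℝ {Pi.single y (1 : ℝ), Pi.single y' 1} := by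
    intro x _
    rw [convexHull_pair]
    exact ⟨P x, 1 - P x, (hP x).1, sub_nonneg.2 (hP x).2, by ring, rfl⟩
  rw [← convexHull_pi] at hrows
  refine convexHull_mono (fun p hp => ?_) hrows
  exact mem_V_two_of_rows_mem_pair fun x => hp x trivial

end BinaryChannel

section Mixture

variable {m n : ℕ}

lemma sum_smul_binaryChannel {a b : Fin n → ℝ} (ha : ∀ y, 0 ≤ a y) (hb : ∀ y, 0 ≤ b y)
    (hab : ∑ y, a y = ∑ y, b y) (P : Fin m → ℝ) :
    ∑ y, ∑ y', (a y * b y' / ∑ z, b z) • binaryChannel y y' P =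
      of fun x z => a z * P x + b z * (1 - P x) := by
  have ha0 : ∑ z, b z = 0 → ∀ y, a y = 0 := fun h y =>
    (Finset.sum_eq_zero_iff_of_nonneg fun y _ => ha y).1 (hab.trans h) y (Finset.mem_univ y)
  have hb0 : ∑ z, b z = 0 → ∀ y, b y = 0 := fun h y =>
    (Finset.sum_eq_zero_iff_of_nonneg fun y _ => hb y).1 h y (Finset.mem_univ y)
  ext x z
  simp only [binaryChannel, Matrix.sum_apply, Matrix.smul_apply, of_apply, Pi.add_apply,
    Pi.smul_apply, Pi.single_apply, smul_eq_mul, mul_add, Finset.sum_add_distrib, mul_ite, mul_one,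
    mul_zero, Finset.sum_ite_irrel, ← Finset.sum_mul, ← Finset.sum_div, ← Finset.mul_sum,
    Finset.sum_const_zero, Finset.sum_ite_eq, Finset.mem_univ, if_true, hab]
  rw [mul_div_cancel_of_imp (ha0 · z), mul_div_cancel_left_of_imp (hb0 · z)]

theorem binaryMixture_mem_C {ι : Type*} (s : Finset ι) {P : ι → Fin m → ℝ} {a b : ι → Fin n → ℝ}
    (hP : ∀ i ∈ s, ∀ x, P i x ∈ Set.Icc 0 1) (ha : ∀ i ∈ s, ∀ y, 0 ≤ a i y)
    (hb : ∀ i ∈ s, ∀ y, 0 ≤ b i y) (hab : ∀ i ∈ s, ∑ y, a i y = ∑ y, b i y)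
    (htot : ∑ i ∈ s, ∑ y, a i y = 1) :
    (of fun x y => ∑ i ∈ s, (a i y * P i x + b i y * (1 - P i x))) ∈ C m n 2 := by
  -- Shared randomness draws `i` and a pair of candidate outputs `(y, y')` with probability
  -- `a i y * b i y' / ∑ z, b i z`; the bit then selects `y` or `y'`.
  set w : ι × Fin n × Fin n → ℝ := fun j => a j.1 j.2.1 * b j.1 j.2.2 / ∑ z, b j.1 z
  have hdecomp : (of fun x y => ∑ i ∈ s, (a i y * P i x + b i y * (1 - P i x))) =
      ∑ j ∈ s ×ˢ Finset.univ, w j • binaryChannel j.2.1 j.2.2 (P j.1) := by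
    have hblock : ∀ i ∈ s, ∑ p : Fin n × Fin n, w (i, p) • binaryChannel p.1 p.2 (P i) =
        of fun x y => a i y * P i x + b i y * (1 - P i x) := fun i hi => by
      rw [Fintype.sum_prod_type]
      exact sum_smul_binaryChannel (ha i hi) (hb i hi) (hab i hi) (P i)
    rw [Finset.sum_product, Finset.sum_congr rfl hblock]
    ext x y
    simp [Matrix.sum_apply]
  have hw_nonneg : ∀ j ∈ s ×ˢ Finset.univ, 0 ≤ w j := fun j hj => by
    have hi := (Finset.mem_product.1 hj).1
    exact div_nonneg (mul_nonneg (ha _ hi _) (hb _ hi _)) (Finset.sum_nonneg fun y _ => hb _ hi y)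
  have hw_sum : ∑ j ∈ s ×ˢ Finset.univ, w j = 1 := by
    rw [Finset.sum_product, ← htot]
    refine Finset.sum_congr rfl fun i hi => ?_
    rw [Fintype.sum_prod_type]
    simp only [w, ← Finset.sum_div, ← Finset.mul_sum, ← Finset.sum_mul, hab i hi]
    exact mul_div_cancel_of_imp id
  rw [hdecomp]
  exact (convex_convexHull ℝ _).sum_mem hw_nonneg hw_sum fun j hj =>
    binaryChannel_mem_C _ _ (hP j.1 (Finset.mem_product.1 hj).1)

end Mixture

lemma dotProduct_nonneg_of_mem_convexHull {ι : Type*} [Fintype ι] {S : Set (ι → ℝ)}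
    {v σ : ι → ℝ} (hS : ∀ τ ∈ S, 0 ≤ v ⬝ᵥ τ) (hσ : σ ∈ convexHull ℝ S) : 0 ≤ v ⬝ᵥ σ :=
  convexHull_min hS (convex_halfSpace_ge ⟨dotProduct_add v, fun c w => dotProduct_smul c v w⟩ 0) hσ

local notation "squitStates" => convexHull ℝ ({ws 0, ws 1, ws 2, ws 3} : Set (Fin 3 → ℝ))

section Squit

variable {σ : Fin 3 → ℝ}

lemma squitStates_apply_two (hσ : σ ∈ squitStates) : σ 2 = 1 :=
  convexHull_min (by rintro _ (rfl | rfl | rfl | rfl) <;> simp [ws])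
    (convex_hyperplane (LinearMap.proj (R := ℝ) (φ := fun _ : Fin 3 => ℝ) 2).isLinear 1) hσ

lemma squitStates_dotProduct_nonneg (hσ : σ ∈ squitStates) {s t : ℝ} (hs : |s| ≤ 1)
    (ht : |t| ≤ 1) : 0 ≤ ![s, t, 1] ⬝ᵥ σ := by
  obtain ⟨hs₁, hs₂⟩ := abs_le.1 hs
  obtain ⟨ht₁, ht₂⟩ := abs_le.1 ht
  refine dotProduct_nonneg_of_mem_convexHull ?_ hσ
  rintro _ (rfl | rfl | rfl | rfl) <;> simp only [ws, dotProduct, Fin.sum_univ_three, cons_val] <;>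
    linarith

lemma squitStates_half_dotProduct_mem_Icc (hσ : σ ∈ squitStates) {t : ℝ} (ht : |t| ≤ 1) :
    ![1, t, 1] ⬝ᵥ σ / 2 ∈ Set.Icc 0 1 := by
  have hpos := squitStates_dotProduct_nonneg hσ (s := 1) (by simp) ht
  have hneg := squitStates_dotProduct_nonneg hσ (s := -1) (by simp) (by rwa [abs_neg])
  have h2 := squitStates_apply_two hσ
  simp only [dotProduct, Fin.sum_univ_three, cons_val] at hpos hneg ⊢
  constructor <;> linarith

lemma abs_le_of_nonneg_on_squitStates {e : Fin 3 → ℝ} (he : ∀ σ ∈ squitStates, 0 ≤ e ⬝ᵥ σ) :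
    |e 0| ≤ e 2 ∧ |e 1| ≤ e 2 := by
  have h : ∀ k, 0 ≤ e ⬝ᵥ ws k := fun k => he _ (subset_convexHull ℝ _ (by fin_cases k <;> simp))
  have h0 := h 0; have h1 := h 1; have h2 := h 2; have h3 := h 3
  simp only [ws, dotProduct, Fin.sum_univ_three, cons_val] at h0 h1 h2 h3
  exact ⟨abs_le.2 ⟨by linarith, by linarith⟩, abs_le.2 ⟨by linarith, by linarith⟩⟩

end Squit

/-- The coefficient of `e` on the extreme effect `![s, t, 1] / 2` (`s, t = ±1`) of the squit's
effect cone. If `e 2 = 0` the division returns `0`, which is right because then `e = 0`. -/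
noncomputable def coneCoord (e : Fin 3 → ℝ) (s t : ℝ) : ℝ :=
  (e 2 + s * e 0) * (e 2 + t * e 1) / (2 * e 2)

section ConeCoord

variable {e : Fin 3 → ℝ}

lemma coneCoord_nonneg (h0 : |e 0| ≤ e 2) (h1 : |e 1| ≤ e 2) {s t : ℝ} (hs : |s| ≤ 1)
    (ht : |t| ≤ 1) : 0 ≤ coneCoord e s t := by
  have hfactor : ∀ {r a : ℝ}, |r| ≤ 1 → |a| ≤ e 2 → 0 ≤ e 2 + r * a := fun {r a} hr ha => by
    have : |r * a| ≤ e 2 :=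
      (abs_mul r a).trans_le ((mul_le_of_le_one_left (abs_nonneg a) hr).trans ha)
    linarith [neg_abs_le (r * a)]
  exact div_nonneg (mul_nonneg (hfactor hs h0) (hfactor ht h1)) (by linarith [abs_nonneg (e 0)])

lemma coneCoord_add_coneCoord_neg (h0 : |e 0| ≤ e 2) (s t : ℝ) :
    coneCoord e s t + coneCoord e s (-t) = e 2 + s * e 0 := by
  rcases eq_or_ne (e 2) 0 with hc | hc
  · have : e 0 = 0 := abs_nonpos_iff.1 (hc ▸ h0)
    simp [coneCoord, hc, this]
  · unfold coneCoord
    field_simp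
    ring

lemma coneCoord_sub_coneCoord_neg (h0 : |e 0| ≤ e 2) (h1 : |e 1| ≤ e 2) (s t : ℝ) :
    coneCoord e s t - coneCoord e (-s) (-t) = s * e 0 + t * e 1 := by
  rcases eq_or_ne (e 2) 0 with hc | hc
  · have he0 : e 0 = 0 := abs_nonpos_iff.1 (hc ▸ h0)
    have he1 : e 1 = 0 := abs_nonpos_iff.1 (hc ▸ h1)
    simp [coneCoord, hc, he0, he1]
  · unfold coneCoord
    field_simp
    ring

lemma dotProduct_eq_sum_coneCoord (h0 : |e 0| ≤ e 2) (h1 : |e 1| ≤ e 2) {σ : Fin 3 → ℝ}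
    (hσ : σ 2 = 1) :
    e ⬝ᵥ σ = ∑ t ∈ ({1, -1} : Finset ℝ), (coneCoord e 1 t * (![1, t, 1] ⬝ᵥ σ / 2) +
      coneCoord e (-1) (-t) * (1 - ![1, t, 1] ⬝ᵥ σ / 2)) := by
  have hd1 := coneCoord_sub_coneCoord_neg h0 h1 1 1
  have hd2 := coneCoord_sub_coneCoord_neg h0 h1 1 (-1)
  have hs := coneCoord_add_coneCoord_neg h0 (-1) (-1)
  rw [Finset.sum_pair (by norm_num)]
  simp only [dotProduct, Fin.sum_univ_three, cons_val, hσ]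
  -- the summand for `t` is `(coneCoord e 1 t - coneCoord e (-1) (-t)) * P + coneCoord e (-1) (-t)`
  linear_combination (-(σ 0 + σ 1 + 1) / 2) * hd1 + (-(σ 0 - σ 1 + 1) / 2) * hd2 - hs

end ConeCoord

section Measurement

variable {ι : Type*} [Fintype ι] {f : ι → Fin 3 → ℝ}

lemma sum_coneCoord_eq_sum_coneCoord_neg (hf : ∀ y, |f y 0| ≤ f y 2 ∧ |f y 1| ≤ f y 2)
    (hsum : ∑ y, f y = ![0, 0, 1]) (t : ℝ) :
    ∑ y, coneCoord (f y) 1 t = ∑ y, coneCoord (f y) (-1) (-t) := by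
  have h0 : ∑ y, f y 0 = 0 := by simpa using congrFun hsum 0
  have h1 : ∑ y, f y 1 = 0 := by simpa using congrFun hsum 1
  rw [← sub_eq_zero, ← Finset.sum_sub_distrib]
  simp only [fun y => coneCoord_sub_coneCoord_neg (hf y).1 (hf y).2 1 t, Finset.sum_add_distrib,
    ← Finset.mul_sum, h0, h1]
  ring

lemma sum_sum_coneCoord_eq_one (hf : ∀ y, |f y 0| ≤ f y 2 ∧ |f y 1| ≤ f y 2)
    (hsum : ∑ y, f y = ![0, 0, 1]) :
    ∑ t ∈ ({1, -1} : Finset ℝ), ∑ y, coneCoord (f y) 1 t = 1 := by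
  have h0 : ∑ y, f y 0 = 0 := by simpa using congrFun hsum 0
  have h2 : ∑ y, f y 2 = 1 := by simpa using congrFun hsum 2
  rw [Finset.sum_pair (by norm_num), ← Finset.sum_add_distrib]
  simp only [fun y => coneCoord_add_coneCoord_neg (hf y).1 1 1, Finset.sum_add_distrib, one_mul,
    h0, h2]
  ring

end Measurement

theorem squit_signaling_dimension_two_general (m n : ℕ)
    (ω : Fin m → (Fin 3 → ℝ))
    (hω : ∀ x, ω x ∈ convexHull ℝ ({ws 0, ws 1, ws 2, ws 3} : Set (Fin 3 → ℝ)))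
    (f : Fin n → (Fin 3 → ℝ))
    (hf : ∀ y, ∀ σ ∈ convexHull ℝ ({ws 0, ws 1, ws 2, ws 3} : Set (Fin 3 → ℝ)),
      0 ≤ f y ⬝ᵥ σ)
    (hsum : ∑ y, f y = ![0, 0, 1]) :
    (Matrix.of fun x y => f y ⬝ᵥ ω x) ∈ C m n 2 := by
  have heff : ∀ y, |f y 0| ≤ f y 2 ∧ |f y 1| ≤ f y 2 :=
    fun y => abs_le_of_nonneg_on_squitStates (hf y)
  have hsigns : ∀ t ∈ ({1, -1} : Finset ℝ), |t| ≤ 1 := by simp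
  have hdecomp : (of fun x y => f y ⬝ᵥ ω x) = of fun x y => ∑ t ∈ ({1, -1} : Finset ℝ),
      (coneCoord (f y) 1 t * (![1, t, 1] ⬝ᵥ ω x / 2) +
        coneCoord (f y) (-1) (-t) * (1 - ![1, t, 1] ⬝ᵥ ω x / 2)) := by
    ext x y
    exact dotProduct_eq_sum_coneCoord (heff y).1 (heff y).2 (squitStates_apply_two (hω x))
  rw [hdecomp]
  refine binaryMixture_mem_C _
    (fun t ht x => squitStates_half_dotProduct_mem_Icc (hω x) (hsigns t ht))
    (fun t ht y => coneCoord_nonneg (heff y).1 (heff y).2 (by simp) (hsigns t ht))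
    (fun t ht y => coneCoord_nonneg (heff y).1 (heff y).2 (by simp) (by simpa using hsigns t ht))
    (fun t _ => sum_coneCoord_eq_sum_coneCoord_neg heff hsum t) (sum_sum_coneCoord_eq_one heff hsum)

/-- Every input/output correlation obtainable from a single squit is obtainable
from one classical bit with shared randomness: the squit has signaling dimension 2. -/
theorem squit_signaling_dimension_two (m n : ℕ) (hm : 0 < m) (hn : 0 < n)
    (ω : Fin m → (Fin 3 → ℝ))
    (hω : ∀ x, ω x ∈ convexHull ℝ ({ws 0, ws 1, ws 2, ws 3} : Set (Fin 3 → ℝ)))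
    (f : Fin n → (Fin 3 → ℝ))
    (hf : ∀ y, ∀ σ ∈ convexHull ℝ ({ws 0, ws 1, ws 2, ws 3} : Set (Fin 3 → ℝ)),
      0 ≤ f y ⬝ᵥ σ)
    (hsum : ∑ y, f y = ![0, 0, 1]) :
    (Matrix.of fun x y => f y ⬝ᵥ ω x) ∈ C m n 2 :=
  squit_signaling_dimension_two_general m n ω hω f hf hsum
end

section
/- There exist Θ : Fin 7 → M₃(ℝ) with each Θ(x) among the 16 factorized states {ω_i ω_jᵀ : i, j ∈ {0,1,2,3}}, and F : Fin 7 → M₃(ℝ) with each F(y) a nonnegative linear combination of the 24 extremal normalized effects {E₀, …, E₂₃} and \sum_y F(y) = Ē, such that the 7×7 matrix p with p_{x,y} = Tr(F(y)ᵀ Θ(x)) does not belong to C(7,7,4). Hence the bipartite HS Model, built from two systems each of signaling dimension 2, has signaling dimension strictly greater than 4: it violates the no-hypersignaling principle. -/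
open Matrix

/-- The eight entangled extremal bipartite states `Ω₁₆, …, Ω₂₃`. -/
noncomputable def OmegaEnt : Fin 8 → Matrix (Fin 3) (Fin 3) ℝ :=
  ![(1/2 : ℝ) • Matrix.of ![![-1, 1, 0], ![1, 1, 0], ![0, 0, 2]],
    (1/2 : ℝ) • Matrix.of ![![-1, -1, 0], ![-1, 1, 0], ![0, 0, 2]],
    (1/2 : ℝ) • Matrix.of ![![1, -1, 0], ![-1, -1, 0], ![0, 0, 2]],
    (1/2 : ℝ) • Matrix.of ![![1, 1, 0], ![1, -1, 0], ![0, 0, 2]],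
    (1/2 : ℝ) • Matrix.of ![![-1, -1, 0], ![1, -1, 0], ![0, 0, 2]],
    (1/2 : ℝ) • Matrix.of ![![1, -1, 0], ![1, 1, 0], ![0, 0, 2]],
    (1/2 : ℝ) • Matrix.of ![![1, 1, 0], ![-1, 1, 0], ![0, 0, 2]],
    (1/2 : ℝ) • Matrix.of ![![-1, 1, 0], ![-1, -1, 0], ![0, 0, 2]]]

/-- The eight entangled extremal bipartite normalized effects `E₁₆, …, E₂₃`. -/
noncomputable def EEnt : Fin 8 → Matrix (Fin 3) (Fin 3) ℝ :=
  ![Matrix.of ![![-1, 1, 0], ![1, 1, 0], ![0, 0, 1]],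
    Matrix.of ![![-1, -1, 0], ![-1, 1, 0], ![0, 0, 1]],
    Matrix.of ![![1, -1, 0], ![-1, -1, 0], ![0, 0, 1]],
    Matrix.of ![![1, 1, 0], ![1, -1, 0], ![0, 0, 1]],
    Matrix.of ![![-1, 1, 0], ![-1, -1, 0], ![0, 0, 1]],
    Matrix.of ![![1, 1, 0], ![-1, 1, 0], ![0, 0, 1]],
    Matrix.of ![![1, -1, 0], ![1, 1, 0], ![0, 0, 1]],
    Matrix.of ![![-1, -1, 0], ![1, -1, 0], ![0, 0, 1]]]

/-- The 24 extremal bipartite states `Ω₀, …, Ω₂₃`: the 16 factorized states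
`Ω_{4i+j} = ω_i ω_jᵀ` followed by the 8 entangled ones. -/
noncomputable def Omegas : Fin 24 → Matrix (Fin 3) (Fin 3) ℝ := fun x =>
  if h : (x : ℕ) < 16 then
    Matrix.vecMulVec (ws ⟨(x : ℕ) / 4, by omega⟩) (ws ⟨(x : ℕ) % 4, by omega⟩)
  else OmegaEnt ⟨(x : ℕ) - 16, by have := x.isLt; omega⟩

/-- The 24 extremal bipartite normalized effects `E₀, …, E₂₃`: the 16 factorized
effects `E_{4i+j} = e_i e_jᵀ` followed by the 8 entangled ones. -/
noncomputable def Effs : Fin 24 → Matrix (Fin 3) (Fin 3) ℝ := fun x =>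
  if h : (x : ℕ) < 16 then
    Matrix.vecMulVec (es ⟨(x : ℕ) / 4, by omega⟩) (es ⟨(x : ℕ) % 4, by omega⟩)
  else EEnt ⟨(x : ℕ) - 16, by have := x.isLt; omega⟩

/-- The bipartite unit effect `Ē = ē ēᵀ` with `ē = (0,0,1)`. -/
noncomputable def Ebar : Matrix (Fin 3) (Fin 3) ℝ :=
  Matrix.vecMulVec ![0, 0, 1] ![0, 0, 1]

/-!
A linear witness separates the correlation from `C 7 7 4`. For a nonnegative integer weight
matrix `A`, a deterministic strategy whose outputs lie in a set `S` of columns scores at most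
`∑ x, max_{y ∈ S} A x y` against `A`; for the weights `hsWitness` this is at most `10` whenever
`|S| ≤ 4` (a finite check over the subsets of `Fin 7`), so the bound holds on the convex hull
`C 7 7 4`. Seven factorized states measured with a seven-outcome measurement built from six
factorized effects and the entangled effect `E₂₁` produce a correlation scoring `21 / 2`.
-/

def weightedSum {m n : ℕ} (A : Fin m → Fin n → ℕ) (q : Matrix (Fin m) (Fin n) ℝ) : ℝ :=
  ∑ x, ∑ y, (A x y : ℝ) * q x y

lemma isLinearMap_weightedSum {m n : ℕ} (A : Fin m → Fin n → ℕ) :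
    IsLinearMap ℝ (weightedSum A) where
  map_add p q := by
    simp only [weightedSum, Matrix.add_apply, mul_add, Finset.sum_add_distrib]
  map_smul c q := by
    simp only [weightedSum, Matrix.smul_apply, smul_eq_mul, Finset.mul_sum, mul_left_comm]

lemma sum_mul_le_sup_of_support {ι : Type*} [Fintype ι] (T : Finset ι) (a : ι → ℕ) {w : ι → ℝ}
    (hw : ∀ y, 0 ≤ w y) (hsupp : ∀ y ∉ T, w y = 0) (hsum : ∑ y, w y = 1) :
    ∑ y, (a y : ℝ) * w y ≤ (T.sup a : ℕ) := by
  have hT : ∑ y ∈ T, w y = 1 := by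
    rw [← hsum]; exact Finset.sum_subset T.subset_univ fun y _ hy => hsupp y hy
  calc ∑ y, (a y : ℝ) * w y = ∑ y ∈ T, (a y : ℝ) * w y :=
        (Finset.sum_subset T.subset_univ fun y _ hy => by rw [hsupp y hy, mul_zero]).symm
    _ ≤ ∑ y ∈ T, ((T.sup a : ℕ) : ℝ) * w y := Finset.sum_le_sum fun y hy =>
        mul_le_mul_of_nonneg_right (by exact_mod_cast Finset.le_sup hy) (hw y)
    _ = (T.sup a : ℕ) := by rw [← Finset.mul_sum, hT, mul_one]

section Witness

variable {m n d : ℕ} {A : Fin m → Fin n → ℕ} {b : ℕ}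

lemma weightedSum_le_of_mem_V (hA : ∀ S : Finset (Fin n), S.card ≤ d → ∑ x, S.sup (A x) ≤ b)
    {v : Matrix (Fin m) (Fin n) ℝ} (hv : v ∈ V m n d) : weightedSum A v ≤ b := by
  classical
  obtain ⟨h01, hrow, hcard⟩ := hv
  set T : Finset (Fin n) := Finset.univ.filter fun y => ∃ x, v x y ≠ 0
  have hTcard : T.card ≤ d := by
    rwa [show {y | ∃ x, v x y ≠ 0} = (T : Set (Fin n)) by ext; simp [T],
      Set.ncard_coe_finset] at hcard
  have hsupp (x : Fin m) (y : Fin n) (hy : y ∉ T) : v x y = 0 := by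
    by_contra h
    exact hy (Finset.mem_filter.2 ⟨Finset.mem_univ _, x, h⟩)
  have hnonneg (x : Fin m) (y : Fin n) : 0 ≤ v x y := by
    rcases h01 x y with h | h <;> simp [h]
  calc weightedSum A v ≤ ∑ x, ((T.sup (A x) : ℕ) : ℝ) := Finset.sum_le_sum fun x _ =>
        sum_mul_le_sup_of_support T (A x) (hnonneg x) (hsupp x) (hrow x)
    _ ≤ b := by exact_mod_cast hA T hTcard

lemma C_subset_weightedSum_le (hA : ∀ S : Finset (Fin n), S.card ≤ d → ∑ x, S.sup (A x) ≤ b) :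
    C m n d ⊆ {q | weightedSum A q ≤ b} :=
  convexHull_min (fun _ hv => weightedSum_le_of_mem_V hA hv)
    (convex_halfSpace_le (isLinearMap_weightedSum A) _)

end Witness

lemma exists_nonneg_smul_eq_sum {ι M : Type*} [Fintype ι] [DecidableEq ι] [AddCommMonoid M]
    [Module ℝ M] (v : ι → M) {t : ℝ} (ht : 0 ≤ t) (k : ι) :
    ∃ c : ι → ℝ, (∀ j, 0 ≤ c j) ∧ t • v k = ∑ j, c j • v j :=
  ⟨fun j => if j = k then t else 0, fun j => by positivity,
    by simp only [ite_smul, zero_smul, Finset.sum_ite_eq', Finset.mem_univ, if_true]⟩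

noncomputable def hsStates : Fin 7 → Matrix (Fin 3) (Fin 3) ℝ :=
  ![vecMulVec (ws 2) (ws 1), vecMulVec (ws 3) (ws 2), vecMulVec (ws 1) (ws 2),
    vecMulVec (ws 2) (ws 3), vecMulVec (ws 3) (ws 1), vecMulVec (ws 1) (ws 3),
    vecMulVec (ws 0) (ws 2)]

noncomputable def hsMeasurement : Fin 7 → Matrix (Fin 3) (Fin 3) ℝ :=
  ![(1/8 : ℝ) • Effs 2, (1/8 : ℝ) • Effs 4, (1/8 : ℝ) • Effs 7, (1/8 : ℝ) • Effs 9,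
    (1/8 : ℝ) • Effs 12, (1/8 : ℝ) • Effs 14, (1/4 : ℝ) • Effs 21]

noncomputable def hsCorrelation : Matrix (Fin 7) (Fin 7) ℝ :=
  Matrix.of ![![0, 1/2, 0, 1/2, 0, 0, 0], ![0, 0, 0, 1/2, 0, 1/2, 0],
    ![1/2, 0, 0, 0, 0, 0, 1/2], ![0, 0, 1/2, 0, 0, 0, 1/2], ![0, 0, 0, 1/2, 1/2, 0, 0],
    ![1/2, 0, 1/2, 0, 0, 0, 0], ![1/2, 0, 0, 0, 0, 1/2, 0]]

def hsWitness : Fin 7 → Fin 7 → ℕ :=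
  ![![0, 2, 0, 1, 0, 0, 0], ![0, 0, 0, 1, 0, 2, 0], ![2, 0, 0, 0, 0, 0, 2],
    ![0, 0, 2, 0, 0, 0, 2], ![0, 0, 0, 1, 2, 0, 0], ![2, 0, 2, 1, 0, 0, 0],
    ![0, 0, 0, 0, 0, 0, 0]]

lemma hsStates_factorized (x : Fin 7) :
    ∃ i j : Fin 4, hsStates x = vecMulVec (ws i) (ws j) := by
  fin_cases x <;> exact ⟨_, _, rfl⟩

lemma hsMeasurement_mem_cone (y : Fin 7) :
    ∃ c : Fin 24 → ℝ, (∀ k, 0 ≤ c k) ∧ hsMeasurement y = ∑ k, c k • Effs k := by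
  fin_cases y <;> exact exists_nonneg_smul_eq_sum Effs (by norm_num) _

lemma sum_hsMeasurement : ∑ y, hsMeasurement y = Ebar := by
  ext a b
  fin_cases a <;> fin_cases b <;>
    simp [Fin.sum_univ_seven, hsMeasurement, Effs, es, EEnt, Ebar, vecMulVec_apply] <;> norm_num

lemma trace_hsMeasurement_hsStates :
    (Matrix.of fun x y => trace ((hsMeasurement y)ᵀ * hsStates x)) = hsCorrelation := by
  ext x y
  fin_cases x <;> fin_cases y <;>
    simp [hsMeasurement, hsStates, hsCorrelation, Effs, EEnt, es, ws, trace_fin_three, mul_apply,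
      Fin.sum_univ_three] <;> norm_num

set_option maxRecDepth 4000 in
lemma hsWitness_cut : ∀ S : Finset (Fin 7), S.card ≤ 4 → ∑ x, S.sup (hsWitness x) ≤ 10 := by
  decide

lemma weightedSum_hsWitness_hsCorrelation : weightedSum hsWitness hsCorrelation = 21 / 2 := by
  simp [weightedSum, Fin.sum_univ_seven, hsWitness, hsCorrelation]
  norm_num

/-- The bipartite HS Model violates the no-hypersignaling principle: there is a
correlation obtainable from factorized states and a measurement of the bipartite
HS system which is not obtainable from two classical bits. -/
theorem HS_model_hypersignaling :
    ∃ (Θ : Fin 7 → Matrix (Fin 3) (Fin 3) ℝ) (F : Fin 7 → Matrix (Fin 3) (Fin 3) ℝ),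
      (∀ x, ∃ i j : Fin 4, Θ x = Matrix.vecMulVec (ws i) (ws j)) ∧
      (∀ y, ∃ c : Fin 24 → ℝ, (∀ k, 0 ≤ c k) ∧ F y = ∑ k, c k • Effs k) ∧
      (∑ y, F y = Ebar) ∧
      (Matrix.of fun x y => Matrix.trace ((F y)ᵀ * Θ x)) ∉ C 7 7 4 := by
  refine ⟨hsStates, hsMeasurement, hsStates_factorized, hsMeasurement_mem_cone,
    sum_hsMeasurement, ?_⟩
  rw [trace_hsMeasurement_hsStates]
  intro hC
  have hle : weightedSum hsWitness hsCorrelation ≤ 10 := C_subset_weightedSum_le hsWitness_cut hC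
  rw [weightedSum_hsWitness_hsCorrelation] at hle
  norm_num at hle
end
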